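/- arXiv:1208.3490 — 2 statements merged into one kernel-verified Lean document; each statement's English description precedes it below -/
import Mathlib

section
/- Let T be a band irreducible, σ-order continuous positive operator on a real Banach lattice X with dim X > 1. If Tx = λx for some x > 0 and λ ∈ ℝ, then x is a weak order unit and λ > 0. -/
/-!
Since `T x = λ x` with `T ≥ 0` and `x > 0`, we have `λ ≥ 0`. Every `0 ≤ y` in the band `{x}ᵈᵈ` is the
supremum of `y ⊓ n x`, so by σ-order continuity `T y` is the supremum of `T (y ⊓ n x) ≤ n λ x`; hence
`{x}ᵈᵈ` is `T`-invariant, irreducibility makes it all of `X`, and `x` is a weak unit. If `λ = 0`, the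
same supremum gives `T = 0`, so every band is invariant and `X` has no nontrivial band. Then `v⁺` and
`v⁻` cannot both be nonzero, i.e. `X` is totally ordered, and a totally ordered Archimedean space
containing some `x > 0` is the line `ℝ x`, contradicting `dim X > 1`.
-/

open scoped ENNReal

variable {X : Type*}

def IsPositiveOp [NormedAddCommGroup X] [Lattice X] [HasSolidNorm X] [IsOrderedAddMonoid X] [NormedSpace ℝ X]
    (T : X →L[ℝ] X) : Prop := ∀ x : X, 0 ≤ x → 0 ≤ T x

def IsClosedIdeal [NormedAddCommGroup X] [Lattice X] [HasSolidNorm X] [IsOrderedAddMonoid X] [NormedSpace ℝ X]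
    (J : Submodule ℝ X) : Prop :=
  IsClosed (J : Set X) ∧ ∀ x y : X, |y| ≤ |x| → x ∈ J → y ∈ J

def IdealIrreducible [NormedAddCommGroup X] [Lattice X] [HasSolidNorm X] [IsOrderedAddMonoid X] [NormedSpace ℝ X]
    (T : X →L[ℝ] X) : Prop :=
  ∀ J : Submodule ℝ X, IsClosedIdeal J → (∀ x ∈ J, T x ∈ J) → J = ⊥ ∨ J = ⊤

/-- A band: a solid submodule closed under existing suprema. -/
def IsBand [NormedAddCommGroup X] [Lattice X] [HasSolidNorm X] [IsOrderedAddMonoid X] [NormedSpace ℝ X]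
    (J : Submodule ℝ X) : Prop :=
  (∀ x y : X, |y| ≤ |x| → x ∈ J → y ∈ J) ∧
    ∀ (A : Set X) (x : X), A ⊆ (J : Set X) → IsLUB A x → x ∈ J

def BandIrreducible [NormedAddCommGroup X] [Lattice X] [HasSolidNorm X] [IsOrderedAddMonoid X] [NormedSpace ℝ X]
    (T : X →L[ℝ] X) : Prop :=
  ∀ J : Submodule ℝ X, IsBand J → (∀ x ∈ J, T x ∈ J) → J = ⊥ ∨ J = ⊤

def QuasiInterior [NormedAddCommGroup X] [Lattice X] [HasSolidNorm X] [IsOrderedAddMonoid X] [NormedSpace ℝ X]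
    (x : X) : Prop :=
  closure {y : X | ∃ c : ℝ, |y| ≤ c • x} = Set.univ

/-- A weak (order) unit. -/
def WeakUnit [NormedAddCommGroup X] [Lattice X] [HasSolidNorm X] [IsOrderedAddMonoid X] [NormedSpace ℝ X]
    (x : X) : Prop := 0 < x ∧ ∀ y : X, |y| ⊓ x = 0 → y = 0

def IsPositiveFunc [NormedAddCommGroup X] [Lattice X] [HasSolidNorm X] [IsOrderedAddMonoid X] [NormedSpace ℝ X]
    (f : StrongDual ℝ X) : Prop := ∀ x : X, 0 ≤ x → 0 ≤ f x

def StrictlyPositiveFunc [NormedAddCommGroup X] [Lattice X] [HasSolidNorm X] [IsOrderedAddMonoid X] [NormedSpace ℝ X]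
    (f : StrongDual ℝ X) : Prop := ∀ x : X, 0 < x → 0 < f x

noncomputable def adjOp [NormedAddCommGroup X] [Lattice X] [HasSolidNorm X] [IsOrderedAddMonoid X] [NormedSpace ℝ X]
    (T : X →L[ℝ] X) : StrongDual ℝ X →L[ℝ] StrongDual ℝ X :=
  (ContinuousLinearMap.compL ℝ X X ℝ).flip T

/-- `T` is σ-order continuous: `x_n ↓ 0` implies `T x_n ↓ 0`. -/
def SigmaOrderContinuousOp [NormedAddCommGroup X] [Lattice X] [HasSolidNorm X] [IsOrderedAddMonoid X] [NormedSpace ℝ X]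
    (T : X →L[ℝ] X) : Prop :=
  ∀ u : ℕ → X, Antitone u → IsGLB (Set.range u) 0 →
    IsGLB (Set.range fun n => T (u n)) 0

/-- A σ-order continuous functional. -/
def SigmaOrderContinuousFunc [NormedAddCommGroup X] [Lattice X] [HasSolidNorm X] [IsOrderedAddMonoid X] [NormedSpace ℝ X]
    (f : StrongDual ℝ X) : Prop :=
  ∀ u : ℕ → X, Antitone u → IsGLB (Set.range u) 0 →
    Filter.Tendsto (fun n => f (u n)) Filter.atTop (nhds 0)

/-- A set is relatively weakly compact. -/
def RelWeaklyCompact [NormedAddCommGroup X] [Lattice X] [HasSolidNorm X] [IsOrderedAddMonoid X] [NormedSpace ℝ X]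
    (s : Set X) : Prop :=
  IsCompact (closure ((toWeakSpace ℝ X) '' s))

/-- `T` is order weakly compact: `T[0,x]` is relatively weakly compact for all `x > 0`. -/
def OrderWeaklyCompactOp [NormedAddCommGroup X] [Lattice X] [HasSolidNorm X] [IsOrderedAddMonoid X] [NormedSpace ℝ X]
    (T : X →L[ℝ] X) : Prop :=
  ∀ x : X, 0 < x → RelWeaklyCompact (T '' Set.Icc 0 x)

theorem inf_eq_zero_of_le_left {α : Type*} [Lattice α] [Zero α] {a b c : α} (hab : a ≤ b)
    (ha : 0 ≤ a) (hbc : b ⊓ c = 0) : a ⊓ c = 0 :=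
  le_antisymm (hbc ▸ inf_le_inf_right c hab) (le_inf ha (hbc ▸ inf_le_right))

section LatticeOrderedGroup

variable {α : Type*} [Lattice α] [AddCommGroup α] [IsOrderedAddMonoid α] {a b c : α}

theorem add_inf_eq_zero (ha : a ⊓ c = 0) (hb : b ⊓ c = 0) : (a + b) ⊓ c = 0 := by
  have ha₀ : 0 ≤ a := ha ▸ inf_le_left
  have hb₀ : 0 ≤ b := hb ▸ inf_le_left
  have hc₀ : 0 ≤ c := ha ▸ inf_le_right
  refine le_antisymm ?_ (le_inf (add_nonneg ha₀ hb₀) hc₀)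
  have h : (a + b) ⊓ c ≤ a :=
    calc (a + b) ⊓ c ≤ (a + b) ⊓ (a + c) := inf_le_inf_left _ (le_add_of_nonneg_left ha₀)
      _ = a := by rw [← add_inf, hb, add_zero]
  exact ha ▸ le_inf h inf_le_right

theorem nsmul_inf_eq_zero (h : a ⊓ b = 0) (n : ℕ) : (n • a) ⊓ b = 0 := by
  induction n with
  | zero => simpa using (h ▸ inf_le_right : (0 : α) ≤ b)
  | succ n ih => rw [succ_nsmul]; exact add_inf_eq_zero ih h

theorem nonneg_of_nsmul_nonneg {n : ℕ} (hn : n ≠ 0) (h : 0 ≤ n • a) : 0 ≤ a := by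
  have hle : a⁻ ≤ n • a⁺ :=
    calc a⁻ ≤ n • a⁻ := le_self_nsmul (negPart_nonneg a) hn
      _ ≤ n • a⁺ := by rwa [← sub_nonneg, ← nsmul_sub, posPart_sub_negPart]
  have hdisj : a⁻ ⊓ n • a⁺ = 0 := by
    rw [inf_comm]; exact nsmul_inf_eq_zero (posPart_inf_negPart_eq_zero a) n
  rw [← negPart_eq_zero, ← hdisj, inf_eq_left.mpr hle]

theorem IsLUB.inf_le_of_forall {s : Set α} (hs : IsLUB s a) {u : α}
    (h : ∀ x ∈ s, x ⊓ b ≤ u) : a ⊓ b ≤ u := by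
  have key : ∀ x ∈ s, x ≤ u + a ⊔ b - b := fun x hx =>
    calc x = x ⊓ b + x ⊔ b - b := by rw [inf_add_sup, add_sub_cancel_right]
      _ ≤ u + a ⊔ b - b := by gcongr; exacts [h x hx, hs.1 hx]
  calc a ⊓ b = a + b - a ⊔ b := by rw [← inf_add_sup, add_sub_cancel_right]
    _ ≤ (u + a ⊔ b - b) + b - a ⊔ b := by gcongr; exact hs.2 key
    _ = u := by abel

theorem isLUB_range_iff_isGLB_range_sub {ι : Type*} {u : ι → α} :
    IsLUB (Set.range u) a ↔ IsGLB (Set.range fun i => a - u i) 0 := by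
  rw [← (OrderIso.subLeft a).isLUB_image', ← Set.range_comp]
  simp only [Function.comp_def, OrderIso.subLeft_apply, sub_self]
  rfl

theorem eq_zero_of_abs_le_zero (h : |a| ≤ 0) : a = 0 :=
  le_antisymm ((le_abs_self a).trans h) (neg_nonpos.mp ((neg_le_abs a).trans h))

theorem rat_smul_nonneg [Module ℝ α] {q : ℚ} (hq : 0 ≤ q) {y : α} (hy : 0 ≤ y) :
    0 ≤ (q : ℝ) • y := by
  refine nonneg_of_nsmul_nonneg q.den_ne_zero ?_
  have hnum : (q.den : ℝ) * q = (q.num.toNat : ℕ) := by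
    rw [show ((q.num.toNat : ℕ) : ℝ) = (q.num : ℝ) by
      exact_mod_cast Int.toNat_of_nonneg (Rat.num_nonneg.mpr hq)]
    exact_mod_cast (mul_comm _ _).trans (Rat.mul_den_eq_num q)
  have h : q.den • ((q : ℝ) • y) = q.num.toNat • y := by
    rw [← Nat.cast_smul_eq_nsmul ℝ, ← Nat.cast_smul_eq_nsmul ℝ, smul_smul, hnum]
  rw [h]
  exact nsmul_nonneg hy _

end LatticeOrderedGroup

section NormedLattice

variable [NormedAddCommGroup X] [Lattice X] [HasSolidNorm X] [IsOrderedAddMonoid X]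
  [NormedSpace ℝ X]

-- The order and the scalar action are linked only through addition; compatibility comes from
-- division by integers in a lattice-ordered group, density of `ℚ`, and the closed positive cone.
instance HasSolidNorm.isOrderedModule : IsOrderedModule ℝ X :=
  .of_smul_nonneg fun c hc y hy => by
    have hclosed : IsClosed {c : ℝ | 0 ≤ |c| • y} :=
      isClosed_le continuous_const ((continuous_abs (G := ℝ)).smul continuous_const)
    have h : 0 ≤ |c| • y := Rat.denseRange_cast.induction_on c hclosed fun q => by
      simpa only [Rat.cast_abs] using rat_smul_nonneg (abs_nonneg q) hy
    rwa [abs_of_nonneg hc] at h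

theorem nonpos_of_forall_nsmul_le {a b : X} (h : ∀ n : ℕ, n • a ≤ b) : a ≤ 0 := by
  have hle : ∀ n : ℕ, a ≤ ((n : ℝ) + 1)⁻¹ • b := fun n => by
    have hn : (0 : ℝ) < (n : ℝ) + 1 := by positivity
    calc a = ((n : ℝ) + 1)⁻¹ • ((n + 1 : ℕ) • a) := by
          rw [← Nat.cast_smul_eq_nsmul ℝ, smul_smul, Nat.cast_succ, inv_mul_cancel₀ hn.ne',
            one_smul]
      _ ≤ ((n : ℝ) + 1)⁻¹ • b := smul_le_smul_of_nonneg_left (h _) (inv_nonneg.mpr hn.le)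
  have hlim : Filter.Tendsto (fun n : ℕ => ((n : ℝ) + 1)⁻¹ • b) Filter.atTop (nhds 0) := by
    simpa using (tendsto_one_div_add_atTop_nhds_zero_nat (𝕜 := ℝ)).smul_const b
  exact ge_of_tendsto' hlim hle

theorem abs_smul_le (c : ℝ) (y : X) : |c • y| ≤ |c| • |y| := by
  rcases le_total 0 c with hc | hc
  · rw [abs_of_nonneg hc, abs_le']
    refine ⟨smul_le_smul_of_nonneg_left (le_abs_self y) hc, ?_⟩
    rw [← smul_neg]
    exact smul_le_smul_of_nonneg_left (neg_le_abs y) hc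
  · rw [abs_of_nonpos hc, abs_le']
    refine ⟨?_, ?_⟩
    · rw [← neg_smul_neg]
      exact smul_le_smul_of_nonneg_left (neg_le_abs y) (neg_nonneg.mpr hc)
    · rw [← neg_smul]
      exact smul_le_smul_of_nonneg_left (le_abs_self y) (neg_nonneg.mpr hc)

def disjointCompl (S : Set X) : Submodule ℝ X where
  carrier := {y | ∀ z ∈ S, |y| ⊓ |z| = 0}
  zero_mem' z _ := by simp
  add_mem' {a b} ha hb z hz :=
    inf_eq_zero_of_le_left (abs_add_le a b) (abs_nonneg _) (add_inf_eq_zero (ha z hz) (hb z hz))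
  smul_mem' c y hy z hz := by
    have hle : |c • y| ≤ ⌈|c|⌉₊ • |y| :=
      calc |c • y| ≤ |c| • |y| := abs_smul_le c y
        _ ≤ (⌈|c|⌉₊ : ℝ) • |y| :=
          smul_le_smul_of_nonneg_right (Nat.le_ceil _) (abs_nonneg y)
        _ = ⌈|c|⌉₊ • |y| := Nat.cast_smul_eq_nsmul ℝ _ _
    exact inf_eq_zero_of_le_left hle (abs_nonneg _) (nsmul_inf_eq_zero (hy z hz) _)

theorem mem_disjointCompl {S : Set X} {y : X} :
    y ∈ disjointCompl S ↔ ∀ z ∈ S, |y| ⊓ |z| = 0 :=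
  Iff.rfl

theorem mem_disjointCompl_of_abs_le {S : Set X} {y z : X} (h : |y| ≤ |z|)
    (hz : z ∈ disjointCompl S) : y ∈ disjointCompl S := fun w hw =>
  inf_eq_zero_of_le_left h (abs_nonneg y) (hz w hw)

theorem eq_zero_of_mem_disjointCompl {S : Set X} {y : X} (hyS : y ∈ S)
    (hy : y ∈ disjointCompl S) : y = 0 :=
  eq_zero_of_abs_le_zero (by simpa using (hy y hyS).le)

-- `{x}ᵈᵈ`, the band generated by `x`
def principalBand (x : X) : Submodule ℝ X := disjointCompl (disjointCompl {x} : Set X)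

theorem self_mem_principalBand (x : X) : x ∈ principalBand x :=
  fun z hz => by rw [inf_comm]; exact hz x rfl

theorem isBand_disjointCompl (S : Set X) : IsBand (disjointCompl S) := by
  refine ⟨fun z y h hz => mem_disjointCompl_of_abs_le h hz, fun A s hA hs z hz => ?_⟩
  have hpos : s⁺ ⊓ |z| = 0 := by
    refine le_antisymm ((hs.union isLUB_singleton).inf_le_of_forall ?_)
      (le_inf (posPart_nonneg s) (abs_nonneg z))
    rintro a (ha | rfl)
    · exact (inf_le_inf_right _ (le_abs_self a)).trans (hA ha z hz).le
    · exact inf_le_left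
  have hneg : s⁻ ⊓ |z| = 0 := by
    rcases A.eq_empty_or_nonempty with rfl | ⟨a₀, ha₀⟩
    · have h : s ≤ s - s⁻ := hs.2 (by simp)
      rw [le_sub_self_iff] at h
      rw [le_antisymm h (negPart_nonneg s)]
      exact inf_eq_left.mpr (abs_nonneg z)
    · have h : s⁻ ≤ |a₀| :=
        (negPart_anti (hs.1 ha₀)).trans (sup_le (neg_le_abs a₀) (abs_nonneg a₀))
      exact inf_eq_zero_of_le_left h (negPart_nonneg s) (hA ha₀ z hz)
  rw [← posPart_add_negPart s]
  exact add_inf_eq_zero hpos hneg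

theorem isLUB_range_inf_nsmul {x y : X} (hx : 0 ≤ x) (hy : 0 ≤ y)
    (hyx : y ∈ principalBand x) :
    IsLUB (Set.range fun n : ℕ => y ⊓ n • x) y := by
  refine ⟨by rintro _ ⟨n, rfl⟩; exact inf_le_left, fun u hu => ?_⟩
  have hu' : ∀ n : ℕ, y ⊓ n • x ≤ u ⊓ y := fun n => le_inf (hu ⟨n, rfl⟩) inf_le_left
  set w := y - u ⊓ y
  have hw₀ : 0 ≤ w := sub_nonneg.mpr inf_le_right
  have hwy : w ≤ y := sub_le_self y (by simpa [inf_eq_right.mpr hy] using hu' 0)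
  -- `w ⊓ x` fits `n` times into `y` for every `n`, so it vanishes
  have hmul : ∀ n : ℕ, n • (w ⊓ x) ≤ y := by
    intro n
    induction n with
    | zero => simpa using hy
    | succ k ih =>
      calc (k + 1) • (w ⊓ x) = k • (w ⊓ x) + w ⊓ x := succ_nsmul _ k
        _ ≤ (y - w) + w := by
          gcongr
          · calc k • (w ⊓ x) ≤ y ⊓ k • x :=
                  le_inf ih (nsmul_le_nsmul_right inf_le_right k)
              _ ≤ u ⊓ y := hu' k
              _ = y - w := by simp [w]
          · exact inf_le_left
        _ = y := sub_add_cancel y w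
  have hwx : w ⊓ x = 0 := le_antisymm (nonpos_of_forall_nsmul_le hmul) (le_inf hw₀ hx)
  have hw : w = 0 := by
    refine eq_zero_of_mem_disjointCompl (S := disjointCompl {x}) ?_ ?_
    · simpa [mem_disjointCompl, abs_of_nonneg hw₀, abs_of_nonneg hx] using hwx
    · exact mem_disjointCompl_of_abs_le (by rwa [abs_of_nonneg hw₀, abs_of_nonneg hy]) hyx
  calc y = u ⊓ y := sub_eq_zero.mp hw
    _ ≤ u := inf_le_left

theorem SigmaOrderContinuousOp.isLUB_range_apply {T : X →L[ℝ] X}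
    (hoc : SigmaOrderContinuousOp T) {u : ℕ → X} {y : X} (hu : Monotone u)
    (h : IsLUB (Set.range u) y) : IsLUB (Set.range fun n => T (u n)) (T y) := by
  rw [isLUB_range_iff_isGLB_range_sub] at h ⊢
  simpa only [map_sub] using hoc _ (fun m n hmn => sub_le_sub_left (hu hmn) y) h

theorem SigmaOrderContinuousOp.isLUB_range_apply_inf_nsmul {T : X →L[ℝ] X}
    (hoc : SigmaOrderContinuousOp T) {x y : X} (hx : 0 ≤ x) (hy : 0 ≤ y)
    (hyx : y ∈ principalBand x) :
    IsLUB (Set.range fun n : ℕ => T (y ⊓ n • x)) (T y) :=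
  hoc.isLUB_range_apply (fun _ _ hmn => inf_le_inf_left y (nsmul_le_nsmul_left hx hmn))
    (isLUB_range_inf_nsmul hx hy hyx)

namespace IsPositiveOp

variable {T : X →L[ℝ] X}

theorem monotone (hT : IsPositiveOp T) : Monotone T := fun a b h => by
  simpa [sub_nonneg] using hT (b - a) (sub_nonneg.mpr h)

theorem abs_apply_le (hT : IsPositiveOp T) (y : X) : |T y| ≤ T |y| :=
  abs_le'.mpr ⟨hT.monotone (le_abs_self y), by simpa using hT.monotone (neg_le_abs y)⟩

theorem mapsTo_principalBand (hT : IsPositiveOp T) (hoc : SigmaOrderContinuousOp T)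
    {l : ℝ} {x : X} (hl : 0 ≤ l) (hx : 0 ≤ x) (heig : T x = l • x) {y : X}
    (hy : y ∈ principalBand x) : T y ∈ principalBand x := by
  set J := principalBand x
  have hJ : IsBand J := isBand_disjointCompl _
  have hTabs : T |y| ∈ J := by
    have hyJ : |y| ∈ J := mem_disjointCompl_of_abs_le (abs_abs y).le hy
    refine hJ.2 _ _ ?_ (hoc.isLUB_range_apply_inf_nsmul hx (abs_nonneg y) hyJ)
    rintro _ ⟨n, rfl⟩
    refine mem_disjointCompl_of_abs_le (z := (n * l) • x) ?_
      (J.smul_mem _ (self_mem_principalBand x))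
    rw [abs_of_nonneg (hT _ (le_inf (abs_nonneg y) (nsmul_nonneg hx n))),
      abs_of_nonneg (smul_nonneg (mul_nonneg n.cast_nonneg hl) hx)]
    calc T (|y| ⊓ n • x) ≤ T (n • x) := hT.monotone inf_le_right
      _ = (n * l) • x := by rw [map_nsmul, heig, ← Nat.cast_smul_eq_nsmul ℝ, smul_smul]
  refine mem_disjointCompl_of_abs_le ?_ hTabs
  rw [abs_of_nonneg (hT _ (abs_nonneg y))]
  exact hT.abs_apply_le y

theorem eq_zero_of_apply_eq_zero (hT : IsPositiveOp T) (hoc : SigmaOrderContinuousOp T) {x : X}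
    (hx : 0 ≤ x) (htop : principalBand x = ⊤) (hTx : T x = 0) : T = 0 := by
  have hpos : ∀ y : X, 0 ≤ y → T y ≤ 0 := fun y hy =>
    (hoc.isLUB_range_apply_inf_nsmul hx hy (htop ▸ Submodule.mem_top)).2 <| by
      rintro _ ⟨n, rfl⟩
      simpa [hTx] using hT.monotone (inf_le_right : y ⊓ n • x ≤ n • x)
  ext y
  exact eq_zero_of_abs_le_zero ((hT.abs_apply_le y).trans (hpos _ (abs_nonneg y)))

end IsPositiveOp

theorem weakUnit_of_principalBand_eq_top {x : X} (hx : 0 < x)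
    (htop : principalBand x = ⊤) : WeakUnit x := by
  refine ⟨hx, fun y hy => eq_zero_of_mem_disjointCompl (S := disjointCompl {x}) ?_ ?_⟩
  · simpa [mem_disjointCompl, abs_of_nonneg hx.le] using hy
  · exact (htop ▸ Submodule.mem_top : y ∈ principalBand x)

theorem nonneg_or_nonpos_of_bandIrreducible_zero (h : BandIrreducible (0 : X →L[ℝ] X)) (v : X) :
    0 ≤ v ∨ v ≤ 0 := by
  have hdisj : v⁻ ∈ disjointCompl {v⁺} := by
    simpa [mem_disjointCompl, abs_of_nonneg, inf_comm] using posPart_inf_negPart_eq_zero v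
  rcases h _ (isBand_disjointCompl {v⁺}) (fun _ _ => zero_mem _) with hbot | htop
  · left
    rw [← negPart_eq_zero]
    simpa [hbot] using hdisj
  · right
    rw [← posPart_eq_zero]
    exact eq_zero_of_mem_disjointCompl (Set.mem_singleton _) (htop ▸ Submodule.mem_top)

theorem rank_le_one_of_forall_nonneg_or_nonpos {x : X} (hx : 0 < x)
    (htot : ∀ v : X, 0 ≤ v ∨ v ≤ 0) : Module.rank ℝ X ≤ 1 := by
  have hle : ∀ a b : X, a ≤ b ∨ b ≤ a := fun a b =>
    (htot (b - a)).imp sub_nonneg.mp sub_nonpos.mp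
  have hbound : ∀ y : X, ∃ n : ℕ, y ≤ n • x := fun y => by
    by_contra! h
    exact hx.not_ge (nonpos_of_forall_nsmul_le fun n => (hle _ _).resolve_left (h n))
  refine rank_le_one_iff.mpr ⟨x, fun y => ?_⟩
  obtain ⟨m, hm⟩ := hbound y
  obtain ⟨n, hn⟩ := hbound (-y)
  have hcont : Continuous fun r : ℝ => r • x := continuous_id.smul continuous_const
  -- `ℝ` is connected and covered by the two closed sets below, so they meet
  obtain ⟨r, -, hr₁, hr₂⟩ := isPreconnected_closed_iff.mp isPreconnected_univ
    {r : ℝ | r • x ≤ y} {r | y ≤ r • x} (isClosed_le hcont continuous_const)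
    (isClosed_le continuous_const hcont) (fun r _ => hle _ _)
    ⟨-n, trivial, by simpa [neg_le, Nat.cast_smul_eq_nsmul] using hn⟩
    ⟨m, trivial, by simpa [Nat.cast_smul_eq_nsmul] using hm⟩
  exact ⟨r, le_antisymm hr₁ hr₂⟩

end NormedLattice

theorem stmt5 [NormedAddCommGroup X] [Lattice X] [HasSolidNorm X] [IsOrderedAddMonoid X] [NormedSpace ℝ X]
    (hdim : 1 < Module.rank ℝ X)
    (T : X →L[ℝ] X) (hT : IsPositiveOp T) (hirr : BandIrreducible T)
    (hoc : SigmaOrderContinuousOp T)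
    (l : ℝ) (x : X) (hx : 0 < x) (heig : T x = l • x) :
    WeakUnit x ∧ 0 < l := by
  have hl : 0 ≤ l := by
    by_contra! hl
    have h := smul_nonpos_of_nonpos_of_nonneg (inv_nonpos.mpr hl.le) (heig ▸ hT x hx.le)
    rw [smul_smul, inv_mul_cancel₀ hl.ne, one_smul] at h
    exact hx.not_ge h
  have hinv : ∀ y ∈ principalBand x, T y ∈ principalBand x :=
    fun y hy => hT.mapsTo_principalBand hoc hl hx.le heig hy
  have htop : principalBand x = ⊤ :=
    (hirr (principalBand x) (isBand_disjointCompl _) hinv).resolve_left fun hbot =>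
      hx.ne' (by simpa [hbot] using self_mem_principalBand x)
  refine ⟨weakUnit_of_principalBand_eq_top hx htop, hl.lt_of_ne' fun hl0 => ?_⟩
  have hT0 : T = 0 := hT.eq_zero_of_apply_eq_zero hoc hx.le htop (by simp [heig, hl0])
  exact hdim.not_ge (rank_le_one_of_forall_nonneg_or_nonpos hx
    (nonneg_or_nonpos_of_bandIrreducible_zero (hT0 ▸ hirr)))
end

section
/- Let T be a nonzero positive operator on a real Banach lattice with Tx₀ = λx₀ and T*x₀* = λx₀* for some x₀ > 0 and x₀* > 0. If T is ideal irreducible, then ker(λ − T) = Span{x₀}. -/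
open scoped ENNReal

variable {X : Type*}

/-!
Applying irreducibility to the null ideal `{x | x₀* |x| = 0}` shows that `x₀*` is strictly
positive, and applying it to the closed ideal generated by a positive eigenvector `u` shows that
`u` is a weak unit. If `Tx = λx`, put `z = x - t x₀` with `x₀*(z) = 0`. Since `T z⁺ ≥ λ z⁺` and
`x₀*(T z⁺ - λ z⁺) = 0`, strict positivity makes `z⁺` an eigenvector, and likewise `z⁻`. These are
disjoint, so one of them vanishes, and `x₀*(z⁺) = x₀*(z⁻)` forces the other to vanish as well.
-/

open LatticeOrderedAddCommGroup Filter

lemma dyadic_smul_nonneg {M : Type*} [AddCommGroup M] [Lattice M] [IsOrderedAddMonoid M]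
    [Module ℝ M] {x : M} (hx : 0 ≤ x) (m k : ℕ) : 0 ≤ ((m : ℝ) / 2 ^ k) • x := by
  induction k with
  | zero => simpa [Nat.cast_smul_eq_nsmul] using nsmul_nonneg hx m
  | succ k ih =>
    refine nsmul_two_semiclosed ?_
    rw [two_nsmul, ← add_smul]
    convert ih using 2
    rw [pow_succ]
    ring

lemma Submodule.apply_mem_topologicalClosure {R M : Type*} [Semiring R] [TopologicalSpace M]
    [AddCommMonoid M] [Module R M] [ContinuousAdd M] [ContinuousConstSMul R M] {T : M →L[R] M}
    {I : Submodule R M} (hTI : ∀ x ∈ I, T x ∈ I) :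
    ∀ x ∈ I.topologicalClosure, T x ∈ I.topologicalClosure :=
  fun _ hx => map_mem_closure T.continuous hx hTI

section NormedLattice

variable [NormedAddCommGroup X] [Lattice X] [HasSolidNorm X] [IsOrderedAddMonoid X]

lemma HasSolidNorm.continuous_abs : Continuous fun w : X => |w| :=
  continuous_id.sup continuous_neg

lemma LatticeOrderedAddCommGroup.IsSolid.closure {s : Set X} (hs : IsSolid s) :
    IsSolid (closure s) := by
  intro x hx y hyx
  -- the truncation `w ↦ (y ⊓ |w|) ⊔ -|w|` maps `s` into `s` and `x` to `y`
  let g : X → X := fun w => (y ⊓ |w|) ⊔ -|w|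
  have hmaps : Set.MapsTo g s s := fun w hw =>
    hs hw <| abs_le'.2 ⟨sup_le inf_le_right ((neg_nonpos.2 (abs_nonneg w)).trans (abs_nonneg w)),
      neg_le.1 le_sup_right⟩
  have hgx : g x = y := by
    simp only [g, inf_eq_left.2 ((le_abs_self y).trans hyx),
      sup_eq_left.2 ((neg_le_neg hyx).trans (neg_le.1 (neg_le_abs y)))]
  have hg : Continuous g :=
    (continuous_const.inf HasSolidNorm.continuous_abs).sup HasSolidNorm.continuous_abs.neg
  exact hgx ▸ map_mem_closure hg hx hmaps

variable [NormedSpace ℝ X]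

-- No compatibility of the order with the real scalars is assumed: it follows because
-- `0 ≤ 2 • a → 0 ≤ a` in a lattice-ordered group and the positive cone is closed.
instance instIsOrderedModuleReal : IsOrderedModule ℝ X :=
  .of_smul_nonneg fun _ hc _ hx =>
    (isClosed_le continuous_const (continuous_id.smul continuous_const)).mem_of_tendsto
      ((tendsto_nat_floor_mul_div_atTop hc).comp (tendsto_pow_atTop_atTop_of_one_lt one_lt_two))
      (.of_forall fun k => dyadic_smul_nonneg hx _ k)

lemma smul_sup_of_nonneg {c : ℝ} (hc : 0 ≤ c) (x y : X) : c • (x ⊔ y) = c • x ⊔ c • y := by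
  rcases hc.eq_or_lt with rfl | hc
  · simp
  · exact (OrderIso.smulRight hc).map_sup x y

lemma smul_inf_of_nonneg {c : ℝ} (hc : 0 ≤ c) (x y : X) : c • (x ⊓ y) = c • x ⊓ c • y := by
  rcases hc.eq_or_lt with rfl | hc
  · simp
  · exact (OrderIso.smulRight hc).map_inf x y

lemma posPart_smul_of_nonneg {c : ℝ} (hc : 0 ≤ c) (x : X) : (c • x)⁺ = c • x⁺ := by
  rw [posPart_def, posPart_def, smul_sup_of_nonneg hc, smul_zero]

lemma abs_smul_real (c : ℝ) (x : X) : |c • x| = |c| • |x| := by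
  rcases le_total 0 c with hc | hc
  · rw [abs_of_nonneg hc, abs, abs, smul_sup_of_nonneg hc, smul_neg]
  · rw [abs_of_nonpos hc, ← neg_smul_neg, abs, abs, smul_sup_of_nonneg (neg_nonneg.2 hc),
      smul_neg, neg_neg, sup_comm]

lemma IsPositiveOp.monotone_s6 {T : X →L[ℝ] X} (hT : IsPositiveOp T) : Monotone T := fun x y h => by
  simpa using hT (y - x) (sub_nonneg.2 h)

lemma IsPositiveOp.abs_apply_le_s6 {T : X →L[ℝ] X} (hT : IsPositiveOp T) (x : X) : |T x| ≤ T |x| :=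
  abs_le'.2 ⟨hT.monotone_s6 (le_abs_self x), by rw [← map_neg]; exact hT.monotone_s6 (neg_le_abs x)⟩

lemma IsPositiveOp.posPart_apply_le {T : X →L[ℝ] X} (hT : IsPositiveOp T) (x : X) :
    (T x)⁺ ≤ T x⁺ :=
  sup_le (hT.monotone_s6 (le_posPart x)) (hT _ (posPart_nonneg x))

lemma IsPositiveFunc.monotone_s6 {f : StrongDual ℝ X} (hf : IsPositiveFunc f) : Monotone f :=
  fun x y h => by simpa using hf (y - x) (sub_nonneg.2 h)

lemma StrictlyPositiveFunc.eq_zero_of_nonneg {f : StrongDual ℝ X} (hf : StrictlyPositiveFunc f)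
    {x : X} (hx : 0 ≤ x) (hfx : f x = 0) : x = 0 := by
  by_contra hne
  exact (hf x (hx.lt_of_ne' hne)).ne' hfx

lemma isClosedIdeal_topologicalClosure {I : Submodule ℝ X} (hI : IsSolid (I : Set X)) :
    IsClosedIdeal I.topologicalClosure :=
  ⟨I.isClosed_topologicalClosure, fun _ _ hyx hx => hI.closure hx hyx⟩

def principalIdeal (u : X) : Submodule ℝ X where
  carrier := {y | ∃ c : ℝ, |y| ≤ c • u}
  zero_mem' := ⟨0, by simp⟩
  add_mem' := by
    rintro a b ⟨c, hc⟩ ⟨d, hd⟩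
    exact ⟨c + d, (abs_add_le a b).trans (by rw [add_smul]; exact add_le_add hc hd)⟩
  smul_mem' := by
    rintro a y ⟨c, hc⟩
    refine ⟨|a| * c, ?_⟩
    rw [abs_smul_real, mul_smul]
    exact smul_le_smul_of_nonneg_left hc (abs_nonneg a)

lemma isSolid_principalIdeal (u : X) : IsSolid (principalIdeal u : Set X) :=
  fun _ ⟨c, hc⟩ _ hyx => ⟨c, hyx.trans hc⟩

lemma mem_principalIdeal_self {u : X} (hu : 0 ≤ u) : u ∈ principalIdeal u :=
  ⟨1, by rw [abs_of_nonneg hu, one_smul]⟩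

lemma IsPositiveOp.mapsTo_principalIdeal {T : X →L[ℝ] X} (hT : IsPositiveOp T) {u : X} {l : ℝ}
    (hu : T u = l • u) : ∀ x ∈ principalIdeal u, T x ∈ principalIdeal u := by
  rintro x ⟨c, hc⟩
  refine ⟨c * l, ?_⟩
  calc |T x| ≤ T |x| := hT.abs_apply_le_s6 x
    _ ≤ T (c • u) := hT.monotone_s6 hc
    _ = (c * l) • u := by rw [map_smul, hu, smul_smul]

lemma eq_zero_of_inf_eq_zero_of_dense {u v : X}
    (hdense : (principalIdeal u).topologicalClosure = ⊤) (hu : 0 ≤ u) (hv : 0 ≤ v)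
    (huv : u ⊓ v = 0) : v = 0 := by
  have hv_mem : v ∈ closure (principalIdeal u : Set X) := by
    rw [← Submodule.topologicalClosure_coe, hdense]
    trivial
  -- `w ↦ |w| ⊓ v` vanishes on the ideal generated by `u`, hence on its closure
  have hmaps : Set.MapsTo (fun w => |w| ⊓ v) (principalIdeal u : Set X) {0} := by
    rintro w ⟨c, hc⟩
    set c' := max c 1
    have hle : |w| ⊓ v ≤ c' • u ⊓ c' • v :=
      inf_le_inf (hc.trans (smul_le_smul_of_nonneg_right (le_max_left c 1) hu))
        (le_smul_of_one_le_left hv (le_max_right c 1))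
    rw [← smul_inf_of_nonneg (by positivity), huv, smul_zero] at hle
    exact le_antisymm hle (le_inf (abs_nonneg w) hv)
  have := map_mem_closure (HasSolidNorm.continuous_abs.inf continuous_const) hv_mem hmaps
  rwa [closure_singleton, Set.mem_singleton_iff, abs_of_nonneg hv, inf_idem] at this

def nullIdeal (f : StrongDual ℝ X) (hf : IsPositiveFunc f) : Submodule ℝ X where
  carrier := {x | f |x| = 0}
  zero_mem' := by simp
  add_mem' {a b} (ha : f |a| = 0) (hb : f |b| = 0) := le_antisymm
    (by simpa [ha, hb] using hf.monotone_s6 (abs_add_le a b)) (hf _ (abs_nonneg _))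
  smul_mem' c x (hx : f |x| = 0) := by simp [abs_smul_real, hx]

lemma isClosedIdeal_nullIdeal {f : StrongDual ℝ X} (hf : IsPositiveFunc f) :
    IsClosedIdeal (nullIdeal f hf) :=
  ⟨isClosed_eq (f.continuous.comp HasSolidNorm.continuous_abs) continuous_const,
    fun _ y hyx hx => le_antisymm ((hf.monotone_s6 hyx).trans_eq hx) (hf _ (abs_nonneg y))⟩

lemma apply_eq_smul_of_smul_le {T : X →L[ℝ] X} {l : ℝ} {f : StrongDual ℝ X}
    (hf : StrictlyPositiveFunc f) (hadj : ∀ x, f (T x) = l * f x) {v : X} (hv : l • v ≤ T v) :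
    T v = l • v :=
  sub_eq_zero.1 <| hf.eq_zero_of_nonneg (sub_nonneg.2 hv) <| by
    rw [map_sub, hadj, map_smul, smul_eq_mul, sub_self]

lemma IsPositiveOp.apply_posPart_eq {T : X →L[ℝ] X} (hT : IsPositiveOp T) {l : ℝ} (hl : 0 ≤ l)
    {f : StrongDual ℝ X} (hf : StrictlyPositiveFunc f) (hadj : ∀ x, f (T x) = l * f x) {z : X}
    (hz : T z = l • z) : T z⁺ = l • z⁺ :=
  apply_eq_smul_of_smul_le hf hadj <| by
    rw [← posPart_smul_of_nonneg hl, ← hz]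
    exact hT.posPart_apply_le z

end NormedLattice

namespace IdealIrreducible

variable [NormedAddCommGroup X] [Lattice X] [HasSolidNorm X] [IsOrderedAddMonoid X]
  [NormedSpace ℝ X] {T : X →L[ℝ] X} {l : ℝ}

lemma strictlyPositiveFunc (hirr : IdealIrreducible T) (hT : IsPositiveOp T)
    {f : StrongDual ℝ X} (hf : IsPositiveFunc f) (hf0 : f ≠ 0) (hadj : ∀ x, f (T x) = l * f x) :
    StrictlyPositiveFunc f := by
  have hinv : ∀ x ∈ nullIdeal f hf, T x ∈ nullIdeal f hf := fun x (hx : f |x| = 0) =>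
    le_antisymm
      (calc f |T x| ≤ f (T |x|) := hf.monotone_s6 (hT.abs_apply_le_s6 x)
        _ = 0 := by rw [hadj, hx, mul_zero])
      (hf _ (abs_nonneg _))
  rcases hirr _ (isClosedIdeal_nullIdeal hf) hinv with hbot | htop
  · intro x hx
    refine (hf x hx.le).lt_of_ne' fun hfx => hx.ne' ?_
    have hx_mem : x ∈ nullIdeal f hf := by
      change f |x| = 0
      rwa [abs_of_nonneg hx.le]
    simpa [hbot] using hx_mem
  · refine absurd (ContinuousLinearMap.ext fun x => ?_) hf0
    have hx : f |x| = 0 := (htop ▸ Submodule.mem_top : x ∈ nullIdeal f hf)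
    have h₁ := hf.monotone_s6 (le_abs_self x)
    have h₂ := hf.monotone_s6 (neg_le_abs x)
    rw [map_neg] at h₂
    rw [zero_apply]
    linarith

lemma eq_zero_of_inf_eq_zero (hirr : IdealIrreducible T) (hT : IsPositiveOp T) {u v : X}
    (hu : 0 ≤ u) (hu0 : u ≠ 0) (heu : T u = l • u) (hv : 0 ≤ v) (huv : u ⊓ v = 0) : v = 0 := by
  rcases hirr _ (isClosedIdeal_topologicalClosure (isSolid_principalIdeal u))
      (Submodule.apply_mem_topologicalClosure (hT.mapsTo_principalIdeal heu)) with hbot | htop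
  · have hu_mem := (principalIdeal u).le_topologicalClosure (mem_principalIdeal_self hu)
    exact absurd (by simpa [hbot] using hu_mem) hu0
  · exact eq_zero_of_inf_eq_zero_of_dense htop hu hv huv

lemma eq_zero_of_apply_eq_smul (hirr : IdealIrreducible T) (hT : IsPositiveOp T) (hl : 0 ≤ l)
    {f : StrongDual ℝ X} (hf : StrictlyPositiveFunc f) (hadj : ∀ x, f (T x) = l * f x) {z : X}
    (hz : T z = l • z) (hfz : f z = 0) : z = 0 := by
  have hpos : T z⁺ = l • z⁺ := hT.apply_posPart_eq hl hf hadj hz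
  have hf_parts : f z⁺ = f z⁻ := by
    rw [← sub_eq_zero, ← map_sub, posPart_sub_negPart, hfz]
  have hparts : z⁺ = 0 ∧ z⁻ = 0 := by
    by_cases hp : z⁺ = 0
    · refine ⟨hp, hf.eq_zero_of_nonneg (negPart_nonneg z) ?_⟩
      rw [← hf_parts, hp, map_zero]
    · have hn := hirr.eq_zero_of_inf_eq_zero hT (posPart_nonneg z) hp hpos (negPart_nonneg z)
        (posPart_inf_negPart_eq_zero z)
      refine ⟨hf.eq_zero_of_nonneg (posPart_nonneg z) ?_, hn⟩
      rw [hf_parts, hn, map_zero]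
  rw [← posPart_sub_negPart z, hparts.1, hparts.2, sub_zero]

end IdealIrreducible

theorem stmt6_general [NormedAddCommGroup X] [Lattice X] [HasSolidNorm X] [IsOrderedAddMonoid X] [NormedSpace ℝ X]
    (T : X →L[ℝ] X) (hT : IsPositiveOp T)
    (hirr : IdealIrreducible T)
    (l : ℝ) (x₀ : X) (hx₀ : 0 < x₀) (heig : T x₀ = l • x₀)
    (f₀ : StrongDual ℝ X) (hf₀ : IsPositiveFunc f₀) (hf₀0 : f₀ ≠ 0)
    (heig' : adjOp T f₀ = l • f₀) :
    {x : X | T x = l • x} = (Submodule.span ℝ {x₀} : Submodule ℝ X) := by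
  have hadj : ∀ x, f₀ (T x) = l * f₀ x := fun x => by simpa [adjOp] using congr($heig' x)
  have hf₀pos := hirr.strictlyPositiveFunc hT hf₀ hf₀0 hadj
  have hfx₀ : 0 < f₀ x₀ := hf₀pos x₀ hx₀
  have hl : 0 ≤ l := (mul_nonneg_iff_of_pos_right hfx₀).1 <| by
    rw [← hadj]
    exact hf₀ _ (hT x₀ hx₀.le)
  ext x
  simp only [Set.mem_ofPred_eq, SetLike.mem_coe, Submodule.mem_span_singleton]
  refine ⟨fun hx => ⟨f₀ x / f₀ x₀, ?_⟩, ?_⟩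
  · set z := x - (f₀ x / f₀ x₀) • x₀
    have hz : T z = l • z := by rw [map_sub, map_smul, hx, heig, smul_sub, smul_comm]
    have hfz : f₀ z = 0 := by
      rw [map_sub, map_smul, smul_eq_mul, div_mul_cancel₀ _ hfx₀.ne', sub_self]
    exact (sub_eq_zero.1 (hirr.eq_zero_of_apply_eq_smul hT hl hf₀pos hadj hz hfz)).symm
  · rintro ⟨c, rfl⟩
    rw [map_smul, heig, smul_comm]

theorem stmt6 [NormedAddCommGroup X] [Lattice X] [HasSolidNorm X] [IsOrderedAddMonoid X] [NormedSpace ℝ X]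
    (hdim : 1 < Module.rank ℝ X)
    (T : X →L[ℝ] X) (hT : IsPositiveOp T) (hT0 : T ≠ 0)
    (hirr : IdealIrreducible T)
    (l : ℝ) (x₀ : X) (hx₀ : 0 < x₀) (heig : T x₀ = l • x₀)
    (f₀ : StrongDual ℝ X) (hf₀ : IsPositiveFunc f₀) (hf₀0 : f₀ ≠ 0)
    (heig' : adjOp T f₀ = l • f₀) :
    {x : X | T x = l • x} = (Submodule.span ℝ {x₀} : Submodule ℝ X) :=
  stmt6_general T hT hirr l x₀ hx₀ heig f₀ hf₀ hf₀0 heig'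
end
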